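/- Terminal count discrepancy bound: |N_HPO(M) − N_FE(M)| < 2; hence the integer difference N_HPO(M) − N_FE(M) belongs to {−1, 0, 1}. -/
import Mathlib


/-- Prior weight for FE at iteration `m`: `ω_FE(m) = p₁ − δ·m` with `δ = (p₁ − 0.5)/M`. -/
noncomputable def omegaFE (M : ℕ) (p₁ : ℝ) (m : ℕ) : ℝ :=
  p₁ - ((p₁ - 0.5) / (M : ℝ)) * (m : ℝ)

/-- Prior weight for HPO at iteration `m`: `ω_HPO(m) = p₂ + δ·m` with `p₂ = 1 − p₁`. -/
noncomputable def omegaHPO (M : ℕ) (p₁ : ℝ) (m : ℕ) : ℝ :=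
  (1 - p₁) + ((p₁ - 0.5) / (M : ℝ)) * (m : ℝ)

/-- State function given counts: `Q = ω_FE(m)·(1 + N_HPO) − ω_HPO(m)·(1 + N_FE)`. -/
noncomputable def Qaux (M : ℕ) (p₁ : ℝ) (m NF NH : ℕ) : ℝ :=
  omegaFE M p₁ m * (1 + (NH : ℝ)) - omegaHPO M p₁ m * (1 + (NF : ℝ))

open Classical in
/-- Joint count sequence `(N_FE(m), N_HPO(m))`: start at `(0,0)`; at each step,
if `Q(m) > 0` then FE is selected (first count increments), otherwise HPO is selected. -/
noncomputable def counts (M : ℕ) (p₁ : ℝ) : ℕ → ℕ × ℕ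
  | 0 => (0, 0)
  | m + 1 =>
    let c := counts M p₁ m
    if 0 < Qaux M p₁ m c.1 c.2 then (c.1 + 1, c.2) else (c.1, c.2 + 1)

/-- `N_FE(m)`: number of times FE has been selected up to iteration `m`. -/
noncomputable def NFE (M : ℕ) (p₁ : ℝ) (m : ℕ) : ℕ := (counts M p₁ m).1

/-- `N_HPO(m)`: number of times HPO has been selected up to iteration `m`. -/
noncomputable def NHPO (M : ℕ) (p₁ : ℝ) (m : ℕ) : ℕ := (counts M p₁ m).2

/-- The state function `Q(m) = ω_FE(m)·(1 + N_HPO(m)) − ω_HPO(m)·(1 + N_FE(m))`. -/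
noncomputable def Q (M : ℕ) (p₁ : ℝ) (m : ℕ) : ℝ :=
  Qaux M p₁ m (NFE M p₁ m) (NHPO M p₁ m)


lemma counts_sum (M : ℕ) (p₁ : ℝ) : ∀ m, (counts M p₁ m).1 + (counts M p₁ m).2 = m := by
  intro m
  induction m with
  | zero => simp [counts]
  | succ n ih =>
    rw [counts]
    split <;> simp <;> omega

lemma Qaux_formula (M : ℕ) (hM : 0 < M) (p₁ : ℝ) (m NF NH : ℕ) (hsum : NF + NH = m) :
    Qaux M p₁ m NF NH =
      ((p₁ - 0.5) / (M : ℝ)) * ((M : ℝ) - m) * ((m : ℝ) + 2) + (((NH : ℝ) - NF)) / 2 := by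
  have hM0 : (M : ℝ) ≠ 0 := Nat.cast_ne_zero.mpr hM.ne'
  have h : (NF : ℝ) + NH = m := by exact_mod_cast congrArg (Nat.cast : ℕ → ℝ) hsum
  have e1 : (p₁ - 0.5) / (M : ℝ) * (M : ℝ) = p₁ - 0.5 := div_mul_cancel₀ _ hM0
  unfold Qaux omegaFE omegaHPO
  linear_combination (-(2 + (NF : ℝ) + (NH : ℝ))) * e1
    + ((p₁ - 0.5) / (M : ℝ) * ((M : ℝ) - (m : ℝ))) * h

set_option maxHeartbeats 1000000 in
lemma main_invariant (M : ℕ) (hM : 1 ≤ M) (p₁ : ℝ)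
    (hp₁ : (0.5 : ℝ) ≤ p₁) (hp₂ : p₁ < ((M : ℝ) + 1.5) / ((M : ℝ) + 3)) :
    ∀ m, m ≤ M →
      -2 < ((NHPO M p₁ m : ℝ) - NFE M p₁ m)
            + 2 * ((p₁ - 0.5) / (M : ℝ)) * ((M : ℝ) - m) * ((m : ℝ) + 2) ∧
      ((NHPO M p₁ m : ℝ) - NFE M p₁ m)
            + 2 * ((p₁ - 0.5) / (M : ℝ)) * ((M : ℝ) - m) * ((m : ℝ) + 2) < 2 := by
  have hM0 : (0 : ℝ) < M := by exact_mod_cast hM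
  set d : ℝ := (p₁ - 0.5) / (M : ℝ) with hd
  have hd0 : 0 ≤ d := div_nonneg (by linarith) hM0.le
  have hM3 : (0 : ℝ) < (M : ℝ) + 3 := by linarith
  have hp2' : p₁ * ((M : ℝ) + 3) < (M : ℝ) + 1.5 := (lt_div_iff₀ hM3).mp hp₂
  have hdM : d * (M : ℝ) = p₁ - 0.5 := div_mul_cancel₀ _ hM0.ne'
  have hM1 : (1 : ℝ) ≤ (M : ℝ) := by exact_mod_cast hM
  have hkey : 2 * d * ((M : ℝ) + 1) < 1 := by nlinarith
  intro m
  induction m with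
  | zero =>
    intro _
    simp only [NFE, NHPO, counts, Nat.cast_zero]
    constructor <;> nlinarith
  | succ n ih =>
    intro hn1
    have hn : n ≤ M := Nat.le_of_succ_le hn1
    obtain ⟨ih1, ih2⟩ := ih hn
    simp only [NFE, NHPO] at ih1 ih2
    have hsum := counts_sum M p₁ n
    have hQ : Qaux M p₁ n (counts M p₁ n).1 (counts M p₁ n).2 =
        d * ((M : ℝ) - n) * ((n : ℝ) + 2)
          + (((counts M p₁ n).2 : ℝ) - (counts M p₁ n).1) / 2 :=
      Qaux_formula M hM p₁ n _ _ hsum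
    have hnM : (n : ℝ) ≤ (M : ℝ) - 1 := by
      have : ((n : ℝ) + 1) ≤ (M : ℝ) := by exact_mod_cast hn1
      linarith
    have hn0 : (0 : ℝ) ≤ (n : ℝ) := Nat.cast_nonneg n
    have hstep1 : 2 * d * ((M : ℝ) - 2 * n - 3) ≤ 2 * d * ((M : ℝ) + 1) := by nlinarith
    have hstep2 : -(2 * d * ((M : ℝ) + 1)) ≤ 2 * d * ((M : ℝ) - 2 * n - 3) := by nlinarith
    by_cases hq : 0 < Qaux M p₁ n (counts M p₁ n).1 (counts M p₁ n).2
    · have hc : counts M p₁ (n + 1) = ((counts M p₁ n).1 + 1, (counts M p₁ n).2) := by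
        rw [counts]; simp [hq]
      have hg : 0 < d * ((M : ℝ) - n) * ((n : ℝ) + 2)
          + (((counts M p₁ n).2 : ℝ) - (counts M p₁ n).1) / 2 := hQ ▸ hq
      simp only [NFE, NHPO, hc]
      push_cast
      constructor <;> nlinarith [ih1, ih2, hg, hstep1, hstep2, hkey]
    · have hc : counts M p₁ (n + 1) = ((counts M p₁ n).1, (counts M p₁ n).2 + 1) := by
        rw [counts]; simp [hq]
      have hg' : ¬ (0 < d * ((M : ℝ) - n) * ((n : ℝ) + 2)
          + (((counts M p₁ n).2 : ℝ) - (counts M p₁ n).1) / 2) := hQ ▸ hq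
      push_neg at hg'
      simp only [NFE, NHPO, hc]
      push_cast
      constructor <;> nlinarith [ih1, ih2, hg', hstep1, hstep2, hkey]

theorem terminal_count_discrepancy (M : ℕ) (hM : 1 ≤ M) (p₁ : ℝ)
    (hp₁ : (0.5 : ℝ) ≤ p₁) (hp₂ : p₁ < ((M : ℝ) + 1.5) / ((M : ℝ) + 3)) :
    |(NHPO M p₁ M : ℤ) - (NFE M p₁ M : ℤ)| < 2 ∧
    ((NHPO M p₁ M : ℤ) - (NFE M p₁ M : ℤ)) ∈ ({-1, 0, 1} : Set ℤ) := by
  obtain ⟨h1, h2⟩ := main_invariant M hM p₁ hp₁ hp₂ M le_rfl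
  have hz : ((M : ℝ) - (M : ℕ)) = 0 := by norm_num
  rw [hz] at h1 h2
  have e1 : (-2 : ℝ) < ((NHPO M p₁ M : ℤ) - (NFE M p₁ M : ℤ) : ℝ) := by push_cast; linarith
  have e2 : (((NHPO M p₁ M : ℤ) - (NFE M p₁ M : ℤ)) : ℝ) < 2 := by push_cast; linarith
  have g1 : (-2 : ℤ) < (NHPO M p₁ M : ℤ) - (NFE M p₁ M : ℤ) := by exact_mod_cast e1
  have g2 : (NHPO M p₁ M : ℤ) - (NFE M p₁ M : ℤ) < 2 := by exact_mod_cast e2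
  refine ⟨by rw [abs_lt]; omega, ?_⟩
  simp only [Set.mem_insert_iff, Set.mem_singleton_iff]
  omega
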